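/- For every PL knot K in ℝ³, the complement S² \ O_K of the set of good projection directions has measure zero with respect to the surface measure on the unit sphere S². -/

import Mathlib

/- Common definitions: PL knots in ℝ³, projections, good (generic) directions,
crossing signs, Tait numbers, the spherical indicatrix and the writhe,
following Cimasoni, "Computing the writhe of a knot". -/

open scoped InnerProductSpace Topology
open MeasureTheory Metric Set

noncomputable section

/-- Euclidean three-space. -/
abbrev E3 : Type := EuclideanSpace ℝ (Fin 3)

/-- The unit sphere S² as a subset of ℝ³. -/
def sphere2 : Set E3 := Metric.sphere (0 : E3) 1

/-- The spherical (surface) measure on the unit sphere S². -/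
def sphMeasure : Measure (Metric.sphere (0 : E3) 1) := MeasureTheory.volume.toSphere

/-- The spherical area of (the trace on S² of) a subset of ℝ³. -/
def sphereArea (A : Set E3) : ℝ :=
  (sphMeasure {ξ : Metric.sphere (0 : E3) 1 | (ξ : E3) ∈ A}).toReal

/-- A closed polygonal curve in ℝ³, recorded by an `n`-periodic sequence of vertices;
the curve is the union of the segments joining consecutive vertices. -/
structure PLKnot where
  n : ℕ
  npos : 0 < n
  vtx : ℤ → E3
  periodic : ∀ i : ℤ, vtx (i + n) = vtx i

namespace PLKnot

/-- The union of the segments of the polygonal curve. -/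
def carrier (K : PLKnot) : Set E3 := ⋃ i : ℤ, segment ℝ (K.vtx i) (K.vtx (i + 1))

/-- The vertices of the polygonal curve. -/
def vertices (K : PLKnot) : Set E3 := Set.range K.vtx

/-- The interior points of `K`: points of `K` that are not vertices. -/
def interiorPts (K : PLKnot) : Set E3 := K.carrier \ K.vertices

/-- A polygonal curve is a PL knot if it is homeomorphic to the circle. -/
def IsKnot (K : PLKnot) : Prop := Nonempty (K.carrier ≃ₜ Circle)

end PLKnot

/-- The orthogonal projection of ℝ³ onto the plane ξ^⊥ (ξ a unit vector),
with kernel the line ℝξ. -/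
def proj (ξ x : E3) : E3 := x - ⟪x, ξ⟫_ℝ • ξ

namespace PLKnot

/-- The fiber of `proj ξ` over the point `proj ξ y`, intersected with `K`. -/
def fiber (K : PLKnot) (ξ y : E3) : Set E3 := {x ∈ K.carrier | proj ξ x = proj ξ y}

/-- `ξ` is a good (generic) projection direction for `K`: every fiber of `proj ξ`
meets `K` in the empty set, a single point, or exactly two interior points of `K`. -/
def IsGoodDir (K : PLKnot) (ξ : E3) : Prop :=
  ∀ y : E3, K.fiber ξ y = ∅ ∨ (∃ p, K.fiber ξ y = {p}) ∨
    (∃ p q, p ≠ q ∧ p ∈ K.interiorPts ∧ q ∈ K.interiorPts ∧ K.fiber ξ y = {p, q})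

/-- The set `O_K ⊆ S²` of good projection directions. -/
def goodDirs (K : PLKnot) : Set E3 := {ξ ∈ sphere2 | K.IsGoodDir ξ}

end PLKnot

/-- The determinant (triple product) of three vectors of ℝ³. -/
def det3 (u w ξ : E3) : ℝ :=
  Matrix.det !![u 0, u 1, u 2; w 0, w 1, w 2; ξ 0, ξ 1, ξ 2]

namespace PLKnot

/-- An index of a segment of `K` containing the point `x` (chosen arbitrarily if there
are several; an interior point of an embedded polygonal curve lies on exactly one). -/
def segIdx (K : PLKnot) (x : E3) : ℤ :=
  Classical.epsilon fun i : ℤ => x ∈ segment ℝ (K.vtx i) (K.vtx (i + 1))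

/-- The direction vector at a point `x` of `K`: the direction of the segment of `K`
through `x`, for the orientation of `K` given by the numbering of its vertices. -/
def dirAt (K : PLKnot) (x : E3) : E3 := K.vtx (K.segIdx x + 1) - K.vtx (K.segIdx x)

end PLKnot

/-- The sign of a double point whose upper strand has direction `u` and lower strand
has direction `w`, for the projection along `ξ`: it is `+1` exactly when the oriented
upper strand has to be turned counterclockwise (in the plane ξ^⊥ oriented by ξ, i.e.
by an angle in (0, π)) to coincide with the oriented lower strand, which amounts to
`(u × w) · ξ > 0`, and `-1` otherwise. -/
def crossingSign (ξ u w : E3) : ℝ := Real.sign (det3 u w ξ)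

namespace PLKnot

/-- The double points of the diagram of `K` in the direction `ξ`, recorded as the
ordered pairs `(p, q)` of distinct points of `K` with the same projection, the first
one (the upper strand) lying above the second one. -/
def crossingPairs (K : PLKnot) (ξ : E3) : Set (E3 × E3) :=
  {z : E3 × E3 | z.1 ∈ K.carrier ∧ z.2 ∈ K.carrier ∧ z.1 ≠ z.2 ∧
    proj ξ z.1 = proj ξ z.2 ∧ ⟪z.2, ξ⟫_ℝ < ⟪z.1, ξ⟫_ℝ}

/-- The Tait number `T_K(ξ)` of `K` relative to `ξ`: the sum of the signs of all the
double points of the diagram of `K` in the direction `ξ`. -/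
def tait (K : PLKnot) (ξ : E3) : ℝ :=
  ∑ᶠ z ∈ K.crossingPairs ξ, crossingSign ξ (K.dirAt z.1) (K.dirAt z.2)

/-- The Tait number, extended by `0` to non-generic directions. -/
def taitExt (K : PLKnot) (ξ : E3) : ℝ :=
  haveI := Classical.propDecidable (K.IsGoodDir ξ)
  if K.IsGoodDir ξ then K.tait ξ else 0

/-- The unit direction `s_i ∈ S²` of the `i`-th segment of `K`. -/
def dirOf (K : PLKnot) (i : ℤ) : E3 :=
  ‖K.vtx (i + 1) - K.vtx i‖⁻¹ • (K.vtx (i + 1) - K.vtx i)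

end PLKnot

/-- The great-circle arc on S² joining two unit vectors `a` and `b`: the radial
projection of the straight segment from `a` to `b`. -/
def arcSet (a b : E3) : Set E3 := (fun z : E3 => ‖z‖⁻¹ • z) '' (segment ℝ a b \ {0})

namespace PLKnot

/-- The curve `Γ ⊆ S²`: the union of the great-circle arcs joining the unit directions
of consecutive segments of `K`. -/
def indHalf (K : PLKnot) : Set E3 := ⋃ i : ℤ, arcSet (K.dirOf i) (K.dirOf (i + 1))

/-- The spherical indicatrix `I = Γ ∪ (−Γ)` of `K`. -/
def indicatrix (K : PLKnot) : Set E3 := K.indHalf ∪ (fun x : E3 => -x) '' K.indHalf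

/-- The writhe of `K`: the mean value over `ξ ∈ S²` of the Tait number `T_K(ξ)`. -/
def writhe (K : PLKnot) : ℝ :=
  (1 / (4 * Real.pi)) * ∫ ξ, K.taitExt ξ ∂sphMeasure

end PLKnot

/-!
A direction `ξ` is bad only if some line parallel to `ξ` meets `K` in a vertex and another
point, or in three distinct points. In the first case `ξ` is parallel to the plane through
the vertex and an edge line. In the second, the three points lie on three edge lines: if two of
these lines are coplanar, `ξ` is again parallel to a fixed plane; if they are pairwise skew, their
common transversals form a regulus, so that the point on the first line determines the
transversal up to one exceptional position, and `ξ` lies on the cone over a smooth curve.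
All these cones are Lebesgue-null in `ℝ³`, so their traces on `S²` are null, and there are
only countably many of them.
-/

theorem IsSigmaCompact.measurableSet {X : Type*} [TopologicalSpace X] [T2Space X]
    [MeasurableSpace X] [OpensMeasurableSpace X] {s : Set X} (hs : IsSigmaCompact s) :
    MeasurableSet s := by
  obtain ⟨K, hK, rfl⟩ := hs
  exact .iUnion fun n => (hK n).measurableSet

namespace MeasureTheory

open Module

variable {E : Type*} [NormedAddCommGroup E] [NormedSpace ℝ E] [MeasurableSpace E]
  [BorelSpace E] (μ : Measure E)

theorem Measure.toSphere_eq_zero_of_subset_cone {C : Set E} {T : Set (sphere (0 : E) 1)}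
    (hC : MeasurableSet C) (hμC : μ C = 0) (hcone : ∀ r : ℝ, 0 < r → ∀ x ∈ C, r • x ∈ C)
    (hT : ∀ ξ ∈ T, (ξ : E) ∈ C) : μ.toSphere T = 0 := by
  refine measure_mono_null (show T ⊆ (↑) ⁻¹' C from hT) ?_
  rw [μ.toSphere_apply' (hC.preimage measurable_subtype_coe)]
  refine mul_eq_zero_of_right _ (measure_mono_null ?_ hμC)
  rintro _ ⟨r, hr, _, ⟨ξ, hξ, rfl⟩, rfl⟩
  exact hcone r hr.1 _ hξ

variable [FiniteDimensional ℝ E] [μ.IsAddHaarMeasure]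

theorem addHaar_range_eq_zero_of_finrank_lt {F : Type*} [NormedAddCommGroup F]
    [NormedSpace ℝ F] [FiniteDimensional ℝ F] {h : F → E} (hh : Differentiable ℝ h)
    (hFE : finrank ℝ F < finrank ℝ E) : μ (range h) = 0 := by
  obtain ⟨ψ, hψ⟩ := finrank_le_iff_exists_linearMap.1 hFE.le
  obtain ⟨π, hπ⟩ := ψ.exists_leftInverse_of_injective (LinearMap.ker_eq_bot.2 hψ)
  have hψ_ne_top : LinearMap.range ψ ≠ ⊤ := by
    intro htop
    have := LinearMap.finrank_range_of_inj hψ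
    rw [htop, finrank_top] at this
    omega
  have hsub : range h ⊆ (h ∘ π) '' (LinearMap.range ψ) := by
    rintro _ ⟨x, rfl⟩
    exact ⟨ψ x, LinearMap.mem_range_self ψ x, by simp [← LinearMap.comp_apply, hπ]⟩
  refine measure_mono_null hsub (addHaar_image_eq_zero_of_differentiableOn_of_addHaar_eq_zero μ
    ?_ (Measure.addHaar_submodule μ _ hψ_ne_top))
  exact (hh.comp (LinearMap.toContinuousLinearMap π).differentiable).differentiableOn

namespace Measure

theorem toSphere_eq_zero_of_forall_mem_submodule {V : Submodule ℝ E} (hV : V ≠ ⊤)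
    {T : Set (sphere (0 : E) 1)} (hT : ∀ ξ ∈ T, (ξ : E) ∈ V) : μ.toSphere T = 0 :=
  μ.toSphere_eq_zero_of_subset_cone V.closed_of_finiteDimensional.measurableSet
    (addHaar_submodule μ V hV) (fun r _ _ hx => V.smul_mem r hx) hT

theorem toSphere_eq_zero_of_forall_eq_smul {f : ℝ → E} (hf : Differentiable ℝ f)
    (hE : 2 < finrank ℝ E) {T : Set (sphere (0 : E) 1)}
    (hT : ∀ ξ ∈ T, ∃ m s : ℝ, (ξ : E) = m • f s) : μ.toSphere T = 0 := by
  have hg : Differentiable ℝ fun q : ℝ × ℝ => q.1 • f q.2 := by fun_prop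
  refine μ.toSphere_eq_zero_of_subset_cone (isSigmaCompact_range hg.continuous).measurableSet
    (addHaar_range_eq_zero_of_finrank_lt μ hg (by simpa using hE)) ?_ ?_
  · rintro r - _ ⟨q, rfl⟩
    exact ⟨(r * q.1, q.2), by simp [mul_smul]⟩
  · intro ξ hξ
    obtain ⟨m, s, h⟩ := hT ξ hξ
    exact ⟨(m, s), h.symm⟩

end Measure

end MeasureTheory

theorem det3_expand (p q r : E3) :
    det3 p q r = p 0 * (q 1 * r 2 - q 2 * r 1) - p 1 * (q 0 * r 2 - q 2 * r 0)
      + p 2 * (q 0 * r 1 - q 1 * r 0) := by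
  simp [det3, Matrix.det_fin_three]
  ring

theorem det3_ne_zero_of_span_eq_top {p q r : E3} (h : Submodule.span ℝ {p, q, r} = ⊤) :
    det3 p q r ≠ 0 := by
  have hrange : Set.range ![p, q, r] = {p, q, r} := by
    rw [Matrix.range_cons, Matrix.range_cons, Matrix.range_cons, Matrix.range_empty,
      Set.union_empty]
    rfl
  have hli : LinearIndependent ℝ ![p, q, r] :=
    linearIndependent_of_top_le_span_of_card_eq_finrank (by rw [hrange, h]) (by simp)
  have hrow : (!![p 0, p 1, p 2; q 0, q 1, q 2; r 0, r 1, r 2]).row = WithLp.ofLp ∘ ![p, q, r] := by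
    ext i j
    fin_cases i <;> fin_cases j <;> rfl
  have hunit := Matrix.linearIndependent_rows_iff_isUnit.1 <| hrow ▸
    hli.map' (WithLp.linearEquiv 2 ℝ (Fin 3 → ℝ)).toLinearMap (LinearEquiv.ker _)
  exact ((Matrix.isUnit_iff_isUnit_det _).1 hunit).ne_zero

theorem span_pair_ne_top (a b : E3) : Submodule.span ℝ {a, b} ≠ ⊤ := by
  intro h
  have := finrank_span_finset_le_card (R := ℝ) ({a, b} : Finset E3)
  rw [Set.finrank, Finset.coe_pair, h, finrank_top, finrank_euclideanSpace_fin] at this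
  have := Finset.card_le_two (a := a) (b := b)
  omega

theorem sub_eq_smul_of_proj_eq {ξ x y : E3} (h : proj ξ x = proj ξ y) :
    x - y = (⟪x, ξ⟫_ℝ - ⟪y, ξ⟫_ℝ) • ξ := by
  unfold proj at h
  rw [sub_smul]
  linear_combination (norm := module) h

theorem inner_ne_of_proj_eq {ξ x y : E3} (h : proj ξ x = proj ξ y) (hxy : x ≠ y) :
    ⟪x, ξ⟫_ℝ ≠ ⟪y, ξ⟫_ℝ := by
  intro hinner
  apply hxy
  simpa [hinner, sub_eq_zero] using sub_eq_smul_of_proj_eq h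

/-- `x₂ - x₁ = p + t • u₂ - s • u₁` is parallel to `x₃ - x₁`, so it is coplanar with
`a₃ - x₁ = q - s • u₁` and `u₃`. -/
theorem det3_transversal_relation {p q u₁ u₂ u₃ ξ : E3} {s t r b c : ℝ}
    (h₂ : p + t • u₂ - s • u₁ = b • ξ) (h₃ : q + r • u₃ - s • u₁ = c • ξ) :
    det3 p q u₃ + det3 u₂ q u₃ * t + -(det3 u₁ q u₃ + det3 p u₁ u₃) * s
      + -det3 u₂ u₁ u₃ * (s * t) = 0 := by
  have hq : q - s • u₁ = c • ξ - r • u₃ := by rw [← h₃]; module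
  have h0 : det3 (p + t • u₂ - s • u₁) (q - s • u₁) u₃ = 0 := by
    rw [h₂, hq]
    simp only [det3_expand, PiLp.sub_apply, PiLp.smul_apply, smul_eq_mul]
    ring
  simp only [det3_expand, PiLp.add_apply, PiLp.sub_apply, PiLp.smul_apply, smul_eq_mul] at h0 ⊢
  linear_combination h0

/-- For three pairwise skew lines the relation of `det3_transversal_relation` involves `t`. -/
theorem det3_ne_zero_or_of_skew {p q u₁ u₂ u₃ : E3} (h₁₂ : det3 p u₁ u₂ ≠ 0)
    (h₁₃ : det3 q u₁ u₃ ≠ 0) (h₂₃ : det3 (q - p) u₂ u₃ ≠ 0) :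
    det3 u₂ q u₃ ≠ 0 ∨ det3 u₂ u₁ u₃ ≠ 0 := by
  by_contra! h
  obtain ⟨hB, hD⟩ := h
  have hΔ : det3 u₁ u₂ p ≠ 0 := by
    rwa [show det3 u₁ u₂ p = det3 p u₁ u₂ by simp only [det3_expand]; ring]
  have hD' : det3 u₁ u₂ u₃ = 0 := by
    rw [show det3 u₁ u₂ u₃ = -det3 u₂ u₁ u₃ by simp only [det3_expand]; ring, hD, neg_zero]
  -- Cramer's rule for `u₃` in the basis `u₁, u₂, p`
  have cramer_B : det3 u₁ u₂ p * det3 u₂ q u₃ =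
      det3 u₃ u₂ p * det3 u₂ q u₁ + det3 u₁ u₂ u₃ * det3 u₂ q p := by
    simp only [det3_expand]; ring
  have cramer_13 : det3 u₁ u₂ p * det3 q u₁ u₃ =
      det3 u₁ u₃ p * det3 u₂ q u₁ + det3 u₁ u₂ u₃ * det3 q u₁ p := by
    simp only [det3_expand]; ring
  have cramer_23 : det3 u₁ u₂ p * det3 (q - p) u₂ u₃ =
      det3 u₃ u₂ p * det3 (q - p) u₂ u₁ + det3 u₁ u₂ u₃ * det3 (q - p) u₂ p := by
    simp only [det3_expand, PiLp.sub_apply]; ring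
  rw [hB, hD'] at cramer_B
  rw [hD'] at cramer_13 cramer_23
  rcases mul_eq_zero.1 (by linarith : det3 u₃ u₂ p * det3 u₂ q u₁ = 0) with h | h
  · exact h₂₃ <| (mul_eq_zero.1 (by rw [cramer_23, h]; ring)).resolve_left hΔ
  · exact h₁₃ <| (mul_eq_zero.1 (by rw [cramer_13, h]; ring)).resolve_left hΔ

theorem exists_notMem_or_three_of_not_pair {α : Type*} {F P : Set α}
    (h : ¬(F = ∅ ∨ (∃ p, F = {p}) ∨ ∃ p q, p ≠ q ∧ p ∈ P ∧ q ∈ P ∧ F = {p, q})) :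
    (∃ v ∈ F, v ∉ P ∧ ∃ x ∈ F, x ≠ v) ∨
      ∃ x₁ ∈ F, ∃ x₂ ∈ F, ∃ x₃ ∈ F, x₁ ≠ x₂ ∧ x₁ ≠ x₃ ∧ x₂ ≠ x₃ := by
  by_contra! hsmall
  obtain ⟨hP, hthree⟩ := hsmall
  apply h
  rcases F.eq_empty_or_nonempty with hF | ⟨p, hp⟩
  · exact .inl hF
  by_cases hsingle : ∀ x ∈ F, x = p
  · exact .inr (.inl ⟨p, Set.eq_singleton_iff_unique_mem.2 ⟨hp, hsingle⟩⟩)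
  push Not at hsingle
  obtain ⟨q, hq, hqp⟩ := hsingle
  have hpair : F = {p, q} := by
    refine Set.Subset.antisymm (fun x hx => ?_)
      (Set.insert_subset hp (Set.singleton_subset_iff.2 hq))
    by_contra hx'
    simp only [Set.mem_insert_iff, Set.mem_singleton_iff, not_or] at hx'
    exact hx'.2 (hthree p hp q hq x hx hqp.symm (Ne.symm hx'.1)).symm
  refine .inr (.inr ⟨p, q, hqp.symm, ?_, ?_, hpair⟩) <;> by_contra hnot
  · exact hqp (hP p hp hnot q hq)
  · exact hqp (hP q hq hnot p hp).symm

local notation "𝕊²" => Metric.sphere (0 : E3) 1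

def secantDirs (v a u : E3) : Set 𝕊² :=
  {ξ | ∃ s c : ℝ, c ≠ 0 ∧ a + s • u - v = c • (ξ : E3)}

/-- Directions of lines meeting the lines `aₖ + ℝ uₖ` in three distinct points. -/
def trisecantDirs (a₁ u₁ a₂ u₂ a₃ u₃ : E3) : Set 𝕊² :=
  {ξ | ∃ s t r b c : ℝ, b ≠ 0 ∧ c ≠ 0 ∧ b ≠ c ∧
    a₂ + t • u₂ - (a₁ + s • u₁) = b • (ξ : E3) ∧ a₃ + r • u₃ - (a₁ + s • u₁) = c • (ξ : E3)}

theorem sphMeasure_secantDirs (v a u : E3) : sphMeasure (secantDirs v a u) = 0 := by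
  refine volume.toSphere_eq_zero_of_forall_mem_submodule (span_pair_ne_top (a - v) u) ?_
  rintro ξ ⟨s, c, hc, h⟩
  refine (Submodule.smul_mem_iff _ hc).1 (h ▸ Submodule.mem_span_pair.2 ⟨1, s, ?_⟩)
  module

theorem sphMeasure_eq_zero_of_det3_eq_zero {p u w : E3} (hΔ : det3 p u w = 0) {T : Set 𝕊²}
    (hT : ∀ ξ ∈ T, ∃ s t b : ℝ, b ≠ 0 ∧ p + t • w - s • u = b • (ξ : E3)) :
    sphMeasure T = 0 := by
  refine volume.toSphere_eq_zero_of_forall_mem_submodule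
    (fun h => det3_ne_zero_of_span_eq_top h hΔ) fun ξ hξ => ?_
  obtain ⟨s, t, b, hb, h⟩ := hT ξ hξ
  refine (Submodule.smul_mem_iff _ hb).1 (h ▸ ?_)
  open Submodule in
  exact sub_mem (add_mem (subset_span (by simp)) (smul_mem _ _ (subset_span (by simp))))
    (smul_mem _ _ (subset_span (by simp)))

theorem sphMeasure_eq_zero_of_bilinear {p u w : E3} {A B C D : ℝ} (hBD : B ≠ 0 ∨ D ≠ 0)
    {T : Set 𝕊²} (hT : ∀ ξ ∈ T, ∃ s t b : ℝ, b ≠ 0 ∧ A + B * t + C * s + D * (s * t) = 0 ∧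
      p + t • w - s • u = b • (ξ : E3)) :
    sphMeasure T = 0 := by
  -- `t = -(A + C * s) / (B + D * s)`, with the denominator cleared
  set f : ℝ → E3 := fun s => (B + D * s) • (p - s • u) - (A + C * s) • w
  have hsub : T ⊆ {ξ | (ξ : E3) ∈ Submodule.span ℝ {p - (-B / D) • u, w}} ∪
      {ξ | ∃ m s : ℝ, (ξ : E3) = m • f s} := by
    intro ξ hξ
    obtain ⟨s, t, b, hb, hst, h⟩ := hT ξ hξ
    by_cases hs : B + D * s = 0
    · have hD : D ≠ 0 := fun hD => hBD.elim (fun hB => hB (by simpa [hD] using hs)) (· hD)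
      obtain rfl : s = -B / D := by field_simp; linarith
      left
      change (ξ : E3) ∈ Submodule.span ℝ {p - (-B / D) • u, w}
      rw [← Submodule.smul_mem_iff _ hb, ← h]
      exact Submodule.mem_span_pair.2 ⟨1, t, by module⟩
    · refine .inr ⟨(b * (B + D * s))⁻¹, s, ?_⟩
      have hf : f s = (b * (B + D * s)) • (ξ : E3) := by
        rw [mul_comm, mul_smul, ← h]
        simp only [f, show A + C * s = -((B + D * s) * t) by linarith]
        module
      rw [hf, smul_smul, inv_mul_cancel₀ (mul_ne_zero hb hs), one_smul]
  refine measure_mono_null hsub (measure_union_null ?_ ?_)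
  · exact volume.toSphere_eq_zero_of_forall_mem_submodule (span_pair_ne_top _ _) fun _ h => h
  · exact volume.toSphere_eq_zero_of_forall_eq_smul (by fun_prop) (by simp) fun _ h => h

theorem sphMeasure_trisecantDirs (a₁ u₁ a₂ u₂ a₃ u₃ : E3) :
    sphMeasure (trisecantDirs a₁ u₁ a₂ u₂ a₃ u₃) = 0 := by
  set p := a₂ - a₁
  set q := a₃ - a₁
  have hT : ∀ ξ ∈ trisecantDirs a₁ u₁ a₂ u₂ a₃ u₃, ∃ s t r b c : ℝ, b ≠ 0 ∧ c ≠ 0 ∧ b ≠ c ∧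
      p + t • u₂ - s • u₁ = b • (ξ : E3) ∧ q + r • u₃ - s • u₁ = c • (ξ : E3) := by
    rintro ξ ⟨s, t, r, b, c, hb, hc, hbc, h₂, h₃⟩
    exact ⟨s, t, r, b, c, hb, hc, hbc, by rw [← h₂]; module, by rw [← h₃]; module⟩
  by_cases h₁₂ : det3 p u₁ u₂ = 0
  · refine sphMeasure_eq_zero_of_det3_eq_zero h₁₂ fun ξ hξ => ?_
    obtain ⟨s, t, -, b, -, hb, -, -, h₂, -⟩ := hT ξ hξ
    exact ⟨s, t, b, hb, h₂⟩
  by_cases h₁₃ : det3 q u₁ u₃ = 0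
  · refine sphMeasure_eq_zero_of_det3_eq_zero h₁₃ fun ξ hξ => ?_
    obtain ⟨s, -, r, -, c, -, hc, -, -, h₃⟩ := hT ξ hξ
    exact ⟨s, r, c, hc, h₃⟩
  by_cases h₂₃ : det3 (q - p) u₂ u₃ = 0
  · refine sphMeasure_eq_zero_of_det3_eq_zero h₂₃ fun ξ hξ => ?_
    obtain ⟨s, t, r, b, c, -, -, hbc, h₂, h₃⟩ := hT ξ hξ
    exact ⟨t, r, c - b, sub_ne_zero.2 hbc.symm, by rw [sub_smul, ← h₂, ← h₃]; module⟩
  refine sphMeasure_eq_zero_of_bilinear (p := p) (u := u₁) (w := u₂) (A := det3 p q u₃)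
    (C := -(det3 u₁ q u₃ + det3 p u₁ u₃))
    ((det3_ne_zero_or_of_skew h₁₂ h₁₃ h₂₃).imp id neg_ne_zero.2) fun ξ hξ => ?_
  obtain ⟨s, t, r, b, c, hb, -, -, h₂, h₃⟩ := hT ξ hξ
  exact ⟨s, t, b, hb, det3_transversal_relation h₂ h₃, h₂⟩

namespace PLKnot

theorem exists_eq_of_mem_carrier {K : PLKnot} {x : E3} (hx : x ∈ K.carrier) :
    ∃ (i : ℤ) (s : ℝ), x = K.vtx i + s • (K.vtx (i + 1) - K.vtx i) := by
  obtain ⟨i, hi⟩ := Set.mem_iUnion.1 hx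
  rw [segment_eq_image'] at hi
  obtain ⟨s, -, rfl⟩ := hi
  exact ⟨i, s, rfl⟩

theorem setOf_not_isGoodDir_subset (K : PLKnot) :
    {ξ : 𝕊² | ¬ K.IsGoodDir ξ} ⊆
      (⋃ (m : ℤ) (j : ℤ), secantDirs (K.vtx m) (K.vtx j) (K.vtx (j + 1) - K.vtx j)) ∪
        ⋃ (i : ℤ) (j : ℤ) (k : ℤ), trisecantDirs (K.vtx i) (K.vtx (i + 1) - K.vtx i)
          (K.vtx j) (K.vtx (j + 1) - K.vtx j) (K.vtx k) (K.vtx (k + 1) - K.vtx k) := by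
  intro ξ hξ
  obtain ⟨y, hy⟩ := not_forall.1 hξ
  have hproj {x z : E3} (hx : x ∈ K.fiber ξ y) (hz : z ∈ K.fiber ξ y) : proj ξ x = proj ξ z :=
    hx.2.trans hz.2.symm
  simp only [Set.mem_union, Set.mem_iUnion]
  rcases exists_notMem_or_three_of_not_pair hy with
    ⟨v, hv, hvint, x, hx, hxv⟩ | ⟨x₁, h₁, x₂, h₂, x₃, h₃, h₁₂, h₁₃, h₂₃⟩
  · obtain ⟨m, rfl⟩ : v ∈ K.vertices := by_contra fun hvert => hvint ⟨hv.1, hvert⟩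
    obtain ⟨j, s, rfl⟩ := exists_eq_of_mem_carrier hx.1
    exact .inl ⟨m, j, s, _, sub_ne_zero.2 (inner_ne_of_proj_eq (hproj hx hv) hxv),
      sub_eq_smul_of_proj_eq (hproj hx hv)⟩
  · obtain ⟨i, s, rfl⟩ := exists_eq_of_mem_carrier h₁.1
    obtain ⟨j, t, rfl⟩ := exists_eq_of_mem_carrier h₂.1
    obtain ⟨k, r, rfl⟩ := exists_eq_of_mem_carrier h₃.1
    exact .inr ⟨i, j, k, s, t, r, _, _,
      sub_ne_zero.2 (inner_ne_of_proj_eq (hproj h₂ h₁) (Ne.symm h₁₂)),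
      sub_ne_zero.2 (inner_ne_of_proj_eq (hproj h₃ h₁) (Ne.symm h₁₃)),
      fun h => inner_ne_of_proj_eq (hproj h₂ h₃) h₂₃ (sub_left_injective h),
      sub_eq_smul_of_proj_eq (hproj h₂ h₁), sub_eq_smul_of_proj_eq (hproj h₃ h₁)⟩

end PLKnot

theorem bad_projections_measure_zero_general (K : PLKnot) :
    sphMeasure {ξ : Metric.sphere (0 : E3) 1 | ¬ K.IsGoodDir ξ} = 0 :=
  measure_mono_null K.setOf_not_isGoodDir_subset <| measure_union_null
    (measure_iUnion_null fun _ => measure_iUnion_null fun _ => sphMeasure_secantDirs _ _ _)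
    (measure_iUnion_null fun _ => measure_iUnion_null fun _ => measure_iUnion_null fun _ =>
      sphMeasure_trisecantDirs _ _ _ _ _ _)

/-- For every PL knot `K` in ℝ³, the complement `S² \ O_K` of the set
of good projection directions has measure zero with respect to the surface measure on
the unit sphere S². -/
theorem bad_projections_measure_zero (K : PLKnot) (hK : K.IsKnot) :
    sphMeasure {ξ : Metric.sphere (0 : E3) 1 | ¬ K.IsGoodDir ξ} = 0 :=
  bad_projections_measure_zero_general K
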